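/- arXiv:1602.00182 — 4 statements merged into one kernel-verified Lean document; each statement's English description precedes it below -/
import Mathlib

section
/- Let v be smooth with v(x_{i+1/2}) ≠ 0, and set ε² = −(1/3)·v''(x_{i+1/2})/v(x_{i+1/2}). Then the reconstruction p = (1/2 + (1/4)ε²Δx²)·v̄_i + (1/2 + (1/4)ε²Δx²)·v̄_{i+1} satisfies p = v(x_{i+1/2}) + O(Δx⁴) as Δx → 0. -/
/-!
With `G` a primitive of `v`, the two cell averages add up to `(G (x + h) - G (x - h)) / h`.
In the Taylor expansion of `h ↦ G (x + h) - G (x - h)` the even powers cancel, so this quotient is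
`2 v + v'' h² / 3 + O(h⁴)`. Multiplying by `1/2 + ε² h² / 4` produces the `h²` coefficient
`v'' / 6 + ε² v / 2`, which vanishes for the chosen `ε²`.
-/

open Filter Asymptotics Topology

section

variable {E : Type*} [NormedAddCommGroup E] [NormedSpace ℝ E]

theorem contDiff_integral_right [CompleteSpace E] {f : ℝ → E} {n : ℕ∞}
    (hf : ContDiff ℝ n f) (a : ℝ) : ContDiff ℝ (n + 1) fun y => ∫ t in a..y, f t := by
  have hc : Continuous f := hf.continuous
  refine contDiff_succ_iff_deriv.mpr
    ⟨fun y => (hc.integral_hasStrictDerivAt a y).hasDerivAt.differentiableAt, by simp, ?_⟩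
  rwa [funext (hc.deriv_integral f a)]

theorem taylorWithinEval_univ_five_central_difference (f : ℝ → E) (x h : ℝ) :
    taylorWithinEval f 5 Set.univ x (x + h) - taylorWithinEval f 5 Set.univ x (x - h)
      = (2 * h) • deriv f x + (h ^ 3 / 3) • iteratedDeriv 3 f x
        + (h ^ 5 / 60) • iteratedDeriv 5 f x := by
  simp only [taylor_within_apply, Finset.sum_range_succ, Finset.sum_range_zero,
    iteratedDerivWithin_univ, iteratedDeriv_one, Nat.factorial, add_sub_cancel_left,
    sub_sub_cancel_left]
  push_cast
  module

theorem ContDiff.central_difference_sub_taylor_isBigO {f : ℝ → E} (hf : ContDiff ℝ 5 f)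
    (x : ℝ) :
    (fun h : ℝ =>
        f (x + h) - f (x - h) - ((2 * h) • deriv f x + (h ^ 3 / 3) • iteratedDeriv 3 f x))
      =O[𝓝 0] fun h => h ^ 5 := by
  have hT := taylor_isLittleO_univ (x₀ := x) (n := 5) (f := f) (by exact_mod_cast hf)
  have hfwd : (fun h : ℝ => f (x + h) - taylorWithinEval f 5 Set.univ x (x + h))
      =O[𝓝 0] fun h => h ^ 5 := by
    have : Tendsto (fun h : ℝ => x + h) (𝓝 0) (𝓝 x) := by
      simpa using (continuous_const_add x).tendsto 0
    simpa [Function.comp_def] using (hT.comp_tendsto this).isBigO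
  have hbwd : (fun h : ℝ => f (x - h) - taylorWithinEval f 5 Set.univ x (x - h))
      =O[𝓝 0] fun h => h ^ 5 := by
    have : Tendsto (fun h : ℝ => x - h) (𝓝 0) (𝓝 x) := by
      simpa using (continuous_sub_left x).tendsto 0
    simpa [Function.comp_def, Odd.neg_pow (by decide : Odd 5)] using
      (hT.comp_tendsto this).isBigO
  have hlead : (fun h : ℝ => (h ^ 5 / 60) • iteratedDeriv 5 f x) =O[𝓝 0] fun h => h ^ 5 := by
    refine isBigO_of_le' (c := ‖iteratedDeriv 5 f x‖ / 60) _ fun h => ?_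
    rw [norm_smul, norm_div, Real.norm_ofNat]
    exact (div_mul_comm _ _ _).le
  refine ((hfwd.sub hbwd).add hlead).congr_left fun h => ?_
  linear_combination (norm := module) -taylorWithinEval_univ_five_central_difference f x h

end

theorem perturbed_mean_sub_isBigO_pow_four {F : ℝ → ℝ} {a c e : ℝ}
    (hF : (fun h => F h - (2 * h * a + h ^ 3 / 3 * c)) =O[𝓝 0] fun h => h ^ 5)
    (he : e * a = -(1/3) * c) :
    (fun h => (1/2 + 1/4 * e * h ^ 2) * (F h / h) - a) =O[𝓝[≠] 0] fun h => h ^ 4 := by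
  have hcoef : (fun h : ℝ => 1/2 + 1/4 * e * h ^ 2) =O[𝓝[≠] 0] fun _ => (1 : ℝ) :=
    (((continuous_const.add (continuous_const.mul (continuous_pow 2))).tendsto 0).mono_left
      nhdsWithin_le_nhds).isBigO_one ℝ
  have hrem : (fun h => (F h - (2 * h * a + h ^ 3 / 3 * c)) / h)
      =O[𝓝[≠] 0] fun h => h ^ 4 := by
    refine ((hF.mono nhdsWithin_le_nhds).mul (isBigO_refl (fun h : ℝ => h⁻¹) _))
      |>.trans_eventuallyEq ?_
    filter_upwards [self_mem_nhdsWithin] with h hh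
    field_simp [show h ≠ 0 from hh]
  refine ((hcoef.mul hrem).add (isBigO_const_mul_self (e * c / 12) _ _)).congr' ?_ (by simp)
  filter_upwards [self_mem_nhdsWithin] with h hh
  have hdiv : (2 * h * a + h ^ 3 / 3 * c) / h = 2 * a + h ^ 2 / 3 * c := by
    field_simp [show h ≠ 0 from hh]
  rw [sub_div, hdiv]
  linear_combination (-h ^ 2 / 2) * he

/-- Fourth-order accuracy of the perturbed reconstruction with the optimal shape parameter. -/
theorem stmt_2 (v : ℝ → ℝ) (hv : ContDiff ℝ 4 v) (x : ℝ) (hvx : v x ≠ 0)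
    (e2 : ℝ) (he2 : e2 = -(1/3) * iteratedDeriv 2 v x / v x) :
    (fun Δx : ℝ =>
        ((1/2 + (1/4) * e2 * Δx ^ 2) * ((1/Δx) * ∫ t in (x - Δx)..x, v t)
          + (1/2 + (1/4) * e2 * Δx ^ 2) * ((1/Δx) * ∫ t in x..(x + Δx), v t))
        - v x)
      =O[nhdsWithin 0 (Set.Ioi 0)] (fun Δx : ℝ => Δx ^ 4) := by
  have hc : Continuous v := hv.continuous
  set G : ℝ → ℝ := fun y => ∫ t in x..y, v t
  have hG' : deriv G = v := funext (hc.deriv_integral v x)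
  have hG''' : iteratedDeriv 3 G x = iteratedDeriv 2 v x := by rw [iteratedDeriv_succ', hG']
  have hG : ContDiff ℝ 5 G := contDiff_integral_right (n := 4) hv x
  have hTaylor := hG.central_difference_sub_taylor_isBigO x
  simp only [hG', hG''', smul_eq_mul] at hTaylor
  have he : e2 * v x = -(1/3) * iteratedDeriv 2 v x := by rw [he2]; field_simp
  have hcells :
      ∀ h, (∫ t in (x - h)..x, v t) + ∫ t in x..(x + h), v t = G (x + h) - G (x - h) :=
    fun h => by
      rw [intervalIntegral.integral_add_adjacent_intervals (hc.intervalIntegrable _ _)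
        (hc.intervalIntegrable _ _), intervalIntegral.integral_interval_sub_left
        (hc.intervalIntegrable _ _) (hc.intervalIntegrable _ _)]
  refine ((perturbed_mean_sub_isBigO_pow_four hTaylor he).mono
    (nhdsWithin_mono _ fun h hh => ne_of_gt hh)).congr_left fun h => ?_
  rw [← hcells]
  ring
end

section
/- With ε² chosen as ε² = (2/Δx²)·(−v̄_{i−1} + 2v̄_i − v̄_{i+1})/(−v̄_{i−1} + 5v̄_i + 2v̄_{i+1}), the reconstruction p = (1/2 + (1/4)ε²Δx²)(v̄_i + v̄_{i+1}) satisfies p = v(x_{i+1/2}) + (1/12)v'''(x_{i+1/2})Δx³ + O(Δx⁴), for smooth v with −v̄_{i−1} + 5v̄_i + 2v̄_{i+1} bounded away from 0 (e.g. v(x_{i+1/2}) ≠ 0). -/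
/-!
With the data-based shape parameter the reconstruction is the rational function
`(v̄ᵢ + v̄ᵢ₊₁) (-2 v̄ᵢ₋₁ + 7 v̄ᵢ + v̄ᵢ₊₁) / (2 (-v̄ᵢ₋₁ + 5 v̄ᵢ + 2 v̄ᵢ₊₁))` of the cell averages.
Taylor's theorem for the antiderivative of `v` shows that each cell average agrees up to `O(Δx⁴)`
with the average of the cubic Taylor polynomial of `v` at `x = x_{i+1/2}`. For these polynomial
averages, numerator minus `(v + v''' Δx³ / 12)` times denominator is exactly
`-Δx⁴ (2 v'' - v''' Δx)² / 12`, and the denominator tends to `12 v(x) ≠ 0`.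
-/

open Filter Asymptotics Topology Set
open scoped Nat

theorem taylor_isBigO_univ {E : Type*} [NormedAddCommGroup E] [NormedSpace ℝ E] {f : ℝ → E} {n : ℕ}
    (hf : ContDiff ℝ (n + 1) f) (x₀ : ℝ) :
    (fun x => f x - taylorWithinEval f n univ x₀ x) =O[𝓝 x₀] fun x => (x - x₀) ^ (n + 1) := by
  have hnext := (taylor_isLittleO_univ (x₀ := x₀) (n := n + 1) (by exact_mod_cast hf)).isBigO
  have hstep : (fun x => taylorWithinEval f (n + 1) univ x₀ x - taylorWithinEval f n univ x₀ x)
      =O[𝓝 x₀] fun x => (x - x₀) ^ (n + 1) := by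
    simp_rw [taylorWithinEval_succ, add_sub_cancel_left]
    refine .of_bound (‖(((n + 1 : ℝ) * n !)⁻¹)‖ * ‖iteratedDerivWithin (n + 1) f univ x₀‖)
      (.of_forall fun x => le_of_eq ?_)
    rw [norm_smul, norm_mul]
    ring
  exact (hnext.add hstep).congr_left fun x => by abel

theorem integral_sub_taylor_isBigO {v : ℝ → ℝ} {n : ℕ} (hv : ContDiff ℝ n v) (x : ℝ) :
    (fun s => (∫ t in x..x + s, v t)
        - ∑ k ∈ Finset.range n, iteratedDeriv k v x * s ^ (k + 1) / (k + 1)!)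
      =O[𝓝 0] fun s => s ^ (n + 1) := by
  set F : ℝ → ℝ := fun y => ∫ t in x..y, v t
  have hFv : deriv F = v := funext (hv.continuous.deriv_integral v x)
  have hF : ContDiff ℝ (n + 1) F := contDiff_succ_iff_deriv.2
    ⟨fun y => (hv.continuous.integral_hasStrictDerivAt x y).hasDerivAt.differentiableAt,
      by simp, hFv ▸ hv⟩
  have hT : ∀ s, taylorWithinEval F n univ x (x + s)
      = ∑ k ∈ Finset.range n, iteratedDeriv k v x * s ^ (k + 1) / (k + 1)! := by
    intro s
    rw [taylor_within_apply, Finset.sum_range_succ']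
    simp only [iteratedDerivWithin_univ, iteratedDeriv_succ', hFv]
    simp only [F, iteratedDeriv_zero, intervalIntegral.integral_same, smul_eq_mul, mul_zero,
      add_zero, add_sub_cancel_left]
    exact Finset.sum_congr rfl fun k _ => by ring
  have hshift : Tendsto (fun s : ℝ => x + s) (𝓝 0) (𝓝 x) := by
    simpa using (continuous_const_add x).tendsto 0
  simpa [Function.comp_def, hT] using (taylor_isBigO_univ hF x).comp_tendsto hshift

/-- `(1 / h) ∫_{x + c₁ h}^{x + c₂ h}` of the Taylor polynomial of `v` of degree `n - 1` at `x`. -/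
noncomputable def cellAverageTaylor (v : ℝ → ℝ) (n : ℕ) (x c₁ c₂ h : ℝ) : ℝ :=
  ∑ k ∈ Finset.range n, iteratedDeriv k v x * (c₂ ^ (k + 1) - c₁ ^ (k + 1)) / (k + 1)! * h ^ k

theorem cellAverage_sub_cellAverageTaylor_isBigO {v : ℝ → ℝ} {n : ℕ} (hv : ContDiff ℝ n v)
    (x c₁ c₂ : ℝ) :
    (fun h => 1 / h * (∫ t in (x + c₁ * h)..(x + c₂ * h), v t) - cellAverageTaylor v n x c₁ c₂ h)
      =O[𝓝[≠] 0] fun h => h ^ n := by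
  set R : ℝ → ℝ := fun s => (∫ t in x..x + s, v t)
    - ∑ k ∈ Finset.range n, iteratedDeriv k v x * s ^ (k + 1) / (k + 1)!
  have hR : ∀ c : ℝ, (fun h => R (c * h)) =O[𝓝 0] fun h => h ^ (n + 1) := by
    intro c
    have hc : Tendsto (fun h : ℝ => c * h) (𝓝 0) (𝓝 0) := by
      simpa using (continuous_const_mul c).tendsto 0
    refine ((integral_sub_taylor_isBigO hv x).comp_tendsto hc).trans ?_
    simpa only [Function.comp_def, mul_pow] using (isBigO_refl _ _).const_mul_left (c ^ (n + 1))
  have hcell : ∀ h ≠ (0 : ℝ), 1 / h * (∫ t in (x + c₁ * h)..(x + c₂ * h), v t)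
      - cellAverageTaylor v n x c₁ c₂ h = h⁻¹ * (R (c₂ * h) - R (c₁ * h)) := by
    intro h hh
    rw [← intervalIntegral.integral_interval_sub_left (hv.continuous.intervalIntegrable _ _)
      (hv.continuous.intervalIntegrable _ _)]
    have hpoly : h⁻¹ * (∑ k ∈ Finset.range n, iteratedDeriv k v x * (c₂ * h) ^ (k + 1) / (k + 1)!
        - ∑ k ∈ Finset.range n, iteratedDeriv k v x * (c₁ * h) ^ (k + 1) / (k + 1)!)
        = cellAverageTaylor v n x c₁ c₂ h := by
      rw [← Finset.sum_sub_distrib, Finset.mul_sum]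
      refine Finset.sum_congr rfl fun k _ => ?_
      field_simp
      ring
    rw [← hpoly]
    simp only [R]
    ring
  have hquot : (fun h : ℝ => h⁻¹ * h ^ (n + 1)) =ᶠ[𝓝[≠] 0] fun h => h ^ n :=
    eventually_mem_nhdsWithin.mono fun h hh => by
      simp only [pow_succ', inv_mul_cancel_left₀ (mem_compl_singleton_iff.1 hh)]
  refine ((isBigO_refl (fun h : ℝ => h⁻¹) _).mul (((hR c₂).sub (hR c₁)).mono nhdsWithin_le_nhds))
    |>.congr' (eventually_mem_nhdsWithin.mono fun h hh => (hcell h hh).symm) hquot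

theorem tendsto_of_isBigO_sub_cellAverageTaylor {v : ℝ → ℝ} {n : ℕ} {x c₁ c₂ : ℝ}
    {l : Filter ℝ} (hl : l ≤ 𝓝 0) (hn : n ≠ 0) {a : ℝ → ℝ}
    (ha : (fun h => a h - cellAverageTaylor v n x c₁ c₂ h) =O[l] fun h => h ^ n) :
    Tendsto a l (𝓝 (v x * (c₂ - c₁))) := by
  have hpoly : Tendsto (cellAverageTaylor v n x c₁ c₂) l (𝓝 (v x * (c₂ - c₁))) := by
    have hcont : Continuous (cellAverageTaylor v n x c₁ c₂) := by
      unfold cellAverageTaylor; fun_prop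
    obtain ⟨m, rfl⟩ := Nat.exists_eq_succ_of_ne_zero hn
    have h0 : cellAverageTaylor v (m + 1) x c₁ c₂ 0 = v x * (c₂ - c₁) := by
      simp [cellAverageTaylor, Finset.sum_range_succ']
    exact h0 ▸ (hcont.tendsto 0).mono_left hl
  have hpow : Tendsto (fun h : ℝ => h ^ n) l (𝓝 0) := by
    simpa [zero_pow hn] using ((continuous_pow n).tendsto 0).mono_left hl
  simpa using (ha.trans_tendsto hpow).add hpoly

theorem Asymptotics.IsBigO.mul_sub_mul {α R : Type*} [SeminormedRing R] {l : Filter α}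
    {f₁ f₂ g₁ g₂ : α → R} {k : α → ℝ} (h₁ : (fun x => f₁ x - g₁ x) =O[l] k)
    (h₂ : (fun x => f₂ x - g₂ x) =O[l] k) (hf₁ : f₁ =O[l] fun _ => (1 : ℝ))
    (hg₂ : g₂ =O[l] fun _ => (1 : ℝ)) :
    (fun x => f₁ x * f₂ x - g₁ x * g₂ x) =O[l] k := by
  have h₁' := hf₁.mul h₂
  have h₂' := h₁.mul hg₂
  simp only [one_mul, mul_one] at h₁' h₂'
  exact (h₁'.add h₂').congr_left fun x => by noncomm_ring

noncomputable def shapeParamSq (vm1 v0 vp1 Δx : ℝ) : ℝ :=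
  (2 / Δx ^ 2) * ((-vm1 + 2 * v0 - vp1) / (-vm1 + 5 * v0 + 2 * vp1))

noncomputable def mqReconstruction (vm1 v0 vp1 Δx : ℝ) : ℝ :=
  (1 / 2 + (1 / 4) * shapeParamSq vm1 v0 vp1 Δx * Δx ^ 2) * (v0 + vp1)

theorem mqReconstruction_eq {vm1 v0 vp1 Δx : ℝ} (hΔx : Δx ≠ 0)
    (hD : -vm1 + 5 * v0 + 2 * vp1 ≠ 0) :
    mqReconstruction vm1 v0 vp1 Δx
      = (v0 + vp1) * (-2 * vm1 + 7 * v0 + vp1) / (2 * (-vm1 + 5 * v0 + 2 * vp1)) := by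
  unfold mqReconstruction shapeParamSq
  -- `field_simp` only uses `hD` if the denominator stays an atom.
  generalize hDdef : -vm1 + 5 * v0 + 2 * vp1 = D at hD ⊢
  obtain rfl : vm1 = 5 * v0 + 2 * vp1 - D := by linarith
  field_simp
  ring

theorem mqReconstruction_numerator_isBigO {v : ℝ → ℝ} {x : ℝ} {l : Filter ℝ} (hl : l ≤ 𝓝 0)
    {a b c : ℝ → ℝ}
    (ha : (fun h => a h - cellAverageTaylor v 4 x (-2) (-1) h) =O[l] fun h => h ^ 4)
    (hb : (fun h => b h - cellAverageTaylor v 4 x (-1) 0 h) =O[l] fun h => h ^ 4)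
    (hc : (fun h => c h - cellAverageTaylor v 4 x 0 1 h) =O[l] fun h => h ^ 4) :
    (fun h => (b h + c h) * (-2 * a h + 7 * b h + c h)
      - 2 * (-a h + 5 * b h + 2 * c h) * (v x + 1 / 12 * iteratedDeriv 3 v x * h ^ 3))
      =O[l] fun h => h ^ 4 := by
  set pa := cellAverageTaylor v 4 x (-2) (-1)
  set pb := cellAverageTaylor v 4 x (-1) 0
  set pc := cellAverageTaylor v 4 x 0 1
  set T : ℝ → ℝ := fun h => v x + 1 / 12 * iteratedDeriv 3 v x * h ^ 3
  have hexact : ∀ h, (pb h + pc h) * (-2 * pa h + 7 * pb h + pc h)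
      - 2 * (-pa h + 5 * pb h + 2 * pc h) * T h
      = h ^ 4 * (-(2 * iteratedDeriv 2 v x - iteratedDeriv 3 v x * h) ^ 2 / 12) := by
    intro h
    simp [pa, pb, pc, T, cellAverageTaylor, Finset.sum_range_succ, Nat.factorial]
    ring
  have hbounded : ∀ f : ℝ → ℝ, Continuous f → f =O[l] fun _ => (1 : ℝ) := fun f hf =>
    ((hf.tendsto 0).mono_left hl).isBigO_one ℝ
  have hbc : (fun h => b h + c h) =O[l] fun _ => (1 : ℝ) :=
    ((tendsto_of_isBigO_sub_cellAverageTaylor hl four_ne_zero hb).add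
      (tendsto_of_isBigO_sub_cellAverageTaylor hl four_ne_zero hc)).isBigO_one ℝ
  have hsum : (fun h => (b h + c h) - (pb h + pc h)) =O[l] fun h => h ^ 4 :=
    (hb.add hc).congr_left fun h => by ring
  have hcomb : (fun h => (-2 * a h + 7 * b h + c h) - (-2 * pa h + 7 * pb h + pc h))
      =O[l] fun h => h ^ 4 :=
    (((ha.const_mul_left (-2)).add (hb.const_mul_left 7)).add hc).congr_left fun h => by ring
  have hprod := hsum.mul_sub_mul hcomb hbc (hbounded (fun h => -2 * pa h + 7 * pb h + pc h)
      (by unfold pa pb pc cellAverageTaylor; fun_prop))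
  have hlin : (fun h => 2 * (-a h + 5 * b h + 2 * c h) * T h
      - 2 * (-pa h + 5 * pb h + 2 * pc h) * T h) =O[l] fun h => h ^ 4 :=
    ((((ha.neg_left.add (hb.const_mul_left 5)).add (hc.const_mul_left 2)).const_mul_left 2).mul
      (hbounded T (by fun_prop))).congr (fun h => by ring) fun h => by ring
  have hrest := (isBigO_refl (fun h : ℝ => h ^ 4) l).mul (hbounded
    (fun h => -(2 * iteratedDeriv 2 v x - iteratedDeriv 3 v x * h) ^ 2 / 12) (by fun_prop))
  exact ((hprod.sub hlin).add (hrest.congr_right fun h => mul_one _)).congr_left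
    fun h => by linear_combination -hexact h

theorem mqReconstruction_sub_isBigO {v : ℝ → ℝ} {x : ℝ} (hvx : v x ≠ 0) {l : Filter ℝ}
    (hl : l ≤ 𝓝[≠] 0) {a b c : ℝ → ℝ}
    (ha : (fun h => a h - cellAverageTaylor v 4 x (-2) (-1) h) =O[l] fun h => h ^ 4)
    (hb : (fun h => b h - cellAverageTaylor v 4 x (-1) 0 h) =O[l] fun h => h ^ 4)
    (hc : (fun h => c h - cellAverageTaylor v 4 x 0 1 h) =O[l] fun h => h ^ 4) :
    (fun h => mqReconstruction (a h) (b h) (c h) h - (v x + 1 / 12 * iteratedDeriv 3 v x * h ^ 3))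
      =O[l] fun h => h ^ 4 := by
  have hl₀ : l ≤ 𝓝 0 := hl.trans nhdsWithin_le_nhds
  have hden : Tendsto (fun h => -a h + 5 * b h + 2 * c h) l (𝓝 (6 * v x)) := by
    have := ((tendsto_of_isBigO_sub_cellAverageTaylor hl₀ four_ne_zero ha).neg.add
      ((tendsto_of_isBigO_sub_cellAverageTaylor hl₀ four_ne_zero hb).const_mul 5)).add
      ((tendsto_of_isBigO_sub_cellAverageTaylor hl₀ four_ne_zero hc).const_mul 2)
    convert this using 2
    ring
  have hden₀ : 6 * v x ≠ 0 := mul_ne_zero (by norm_num) hvx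
  have hquot : ∀ᶠ h in l, mqReconstruction (a h) (b h) (c h) h
      - (v x + 1 / 12 * iteratedDeriv 3 v x * h ^ 3)
      = ((b h + c h) * (-2 * a h + 7 * b h + c h)
        - 2 * (-a h + 5 * b h + 2 * c h) * (v x + 1 / 12 * iteratedDeriv 3 v x * h ^ 3))
        * (2 * (-a h + 5 * b h + 2 * c h))⁻¹ := by
    filter_upwards [hl self_mem_nhdsWithin, hden.eventually_ne hden₀] with h hh hD
    rw [mqReconstruction_eq hh hD]
    generalize -a h + 5 * b h + 2 * c h = D at hD ⊢
    field_simp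
  have hinv := ((hden.const_mul 2).inv₀ (mul_ne_zero two_ne_zero hden₀)).isBigO_one ℝ
  exact ((mqReconstruction_numerator_isBigO hl₀ ha hb hc).mul hinv).congr'
    (hquot.mono fun h hh => hh.symm) (.of_forall fun h => mul_one _)

/-- Third-order accuracy of the MQ-RBF-ENO reconstruction with the data-based shape parameter. -/
theorem stmt_4 (v : ℝ → ℝ) (hv : ContDiff ℝ 4 v) (x : ℝ) (hvx : v x ≠ 0) :
    (fun Δx : ℝ =>
        (let vm1 := (1/Δx) * ∫ t in (x - 2*Δx)..(x - Δx), v t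
         let v0 := (1/Δx) * ∫ t in (x - Δx)..x, v t
         let vp1 := (1/Δx) * ∫ t in x..(x + Δx), v t
         let e2 := (2 / Δx ^ 2) * ((-vm1 + 2*v0 - vp1) / (-vm1 + 5*v0 + 2*vp1))
         (1/2 + (1/4) * e2 * Δx ^ 2) * (v0 + vp1))
        - (v x + (1/12) * iteratedDeriv 3 v x * Δx ^ 3))
      =O[nhdsWithin 0 (Set.Ioi 0)] (fun Δx : ℝ => Δx ^ 4) := by
  have hcell (c₁ c₂ : ℝ) : (fun h => 1 / h * (∫ t in (x + c₁ * h)..(x + c₂ * h), v t)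
      - cellAverageTaylor v 4 x c₁ c₂ h) =O[𝓝[>] 0] fun h => h ^ 4 :=
    (cellAverage_sub_cellAverageTaylor_isBigO hv x c₁ c₂).mono
      (nhdsWithin_mono _ fun _ hh => ne_of_gt hh)
  have := mqReconstruction_sub_isBigO hvx (nhdsWithin_mono _ fun _ hh => ne_of_gt hh)
    (hcell (-2) (-1)) (hcell (-1) 0) (hcell 0 1)
  simp only [mqReconstruction, shapeParamSq, neg_mul, one_mul, zero_mul, add_zero,
    ← sub_eq_add_neg] at this
  exact this
end

section
/- Let p be the unique polynomial of degree ≤ 2 whose averages over [0,Δx], [Δx,2Δx], [2Δx,3Δx] equal v̄_{i−1}, v̄_i, v̄_{i+1}. If the ratio (−2v̄_{i−1} + 3v̄_i − v̄_{i+1})/(−v̄_{i−1} + 2v̄_i − v̄_{i+1}) does not lie in the open interval (0, 3) (or the denominator is zero), then p is monotone on [0, 3Δx]. -/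
/-!
Write `p x = a x² + b x + c`. The combinations of cell averages in the criterion are
`-v̄ᵢ₋₁ + 2v̄ᵢ - v̄ᵢ₊₁ = -2aΔx²` and `-2v̄ᵢ₋₁ + 3v̄ᵢ - v̄ᵢ₊₁ = bΔx`, so their ratio is the vertex
`-b / (2a)` of `p` measured in units of `Δx`. If the vertex is not inside `(0, 3Δx)` (or `a = 0`),
the derivative `2a x + b` has constant sign on `(0, 3Δx)`, and `p` is monotone on `[0, 3Δx]`.
-/

open Polynomial Set

theorem Polynomial.eval_eq_quadratic {R : Type*} [CommSemiring R] {p : R[X]} (hp : p.degree ≤ 2)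
    (x : R) : p.eval x = p.coeff 2 * x ^ 2 + p.coeff 1 * x + p.coeff 0 := by
  conv_lhs => rw [eq_quadratic_of_degree_le_two hp]
  simp

theorem integral_quadratic (a b c s u : ℝ) :
    ∫ t in s..u, a * t ^ 2 + b * t + c
      = a * (u ^ 3 - s ^ 3) / 3 + b * (u ^ 2 - s ^ 2) / 2 + c * (u - s) := by
  rw [intervalIntegral.integral_add, intervalIntegral.integral_add,
    intervalIntegral.integral_const_mul, intervalIntegral.integral_const_mul, integral_pow,
    integral_id, intervalIntegral.integral_const, smul_eq_mul]
  · ring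
  all_goals exact Continuous.intervalIntegrable (by fun_prop) _ _

theorem nonneg_or_nonpos_on_Ioo_of_affine {K : Type*} [Field K] [LinearOrder K]
    [IsStrictOrderedRing K] {a b l r : K} (h : a = 0 ∨ -b / a ∉ Ioo l r) :
    (∀ x ∈ Ioo l r, 0 ≤ a * x + b) ∨ (∀ x ∈ Ioo l r, a * x + b ≤ 0) := by
  rcases eq_or_ne a 0 with rfl | ha
  · rcases le_total 0 b with hb | hb
    · exact Or.inl fun x _ => by simpa using hb
    · exact Or.inr fun x _ => by simpa using hb
  have hfactor : ∀ x, a * x + b = a * (x - -b / a) := fun x => by field_simp; ring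
  have hout : -b / a ≤ l ∨ r ≤ -b / a := by
    simp only [mem_Ioo, not_and_or, not_lt] at h
    tauto
  simp_rw [hfactor]
  rcases lt_or_gt_of_ne ha with ha | ha <;> rcases hout with hv | hv
  · exact Or.inr fun x hx => mul_nonpos_of_nonpos_of_nonneg ha.le (by linarith [hx.1])
  · exact Or.inl fun x hx => mul_nonneg_of_nonpos_of_nonpos ha.le (by linarith [hx.2])
  · exact Or.inl fun x hx => mul_nonneg ha.le (by linarith [hx.1])
  · exact Or.inr fun x hx => mul_nonpos_of_nonneg_of_nonpos ha.le (by linarith [hx.2])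

theorem monotoneOn_or_antitoneOn_quadratic {a b c l r : ℝ}
    (h : a = 0 ∨ -b / (2 * a) ∉ Ioo l r) :
    MonotoneOn (fun x => a * x ^ 2 + b * x + c) (Icc l r)
      ∨ AntitoneOn (fun x => a * x ^ 2 + b * x + c) (Icc l r) := by
  have hderiv : ∀ x ∈ Ioo l r,
      HasDerivWithinAt (fun x => a * x ^ 2 + b * x + c) (2 * a * x + b) (Ioo l r) x :=
    fun x _ => by
      refine (((hasDerivAt_pow 2 x).const_mul a).add ((hasDerivAt_id x).const_mul b)).add_const c
        |>.hasDerivWithinAt.congr_deriv ?_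
      simp only [Nat.cast_ofNat, Nat.add_one_sub_one, pow_one, mul_one]; ring
  have hcont : ContinuousOn (fun x => a * x ^ 2 + b * x + c) (Icc l r) :=
    Continuous.continuousOn (by fun_prop)
  rcases nonneg_or_nonpos_on_Ioo_of_affine (a := 2 * a) (b := b) (by simpa using h)
    with hpos | hneg
  · exact Or.inl <| monotoneOn_of_hasDerivWithinAt_nonneg (convex_Icc l r) hcont
      (by rwa [interior_Icc]) (by rwa [interior_Icc])
  · exact Or.inr <| antitoneOn_of_hasDerivWithinAt_nonpos (convex_Icc l r) hcont
      (by rwa [interior_Icc]) (by rwa [interior_Icc])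

/-- Monotonicity criterion for the quadratic reconstruction on the whole stencil. -/
theorem stmt_10 (Δx : ℝ) (hΔx : 0 < Δx) (p : Polynomial ℝ) (hdeg : p.degree ≤ 2)
    (vm1 v0 vp1 : ℝ)
    (h1 : (1/Δx) * ∫ t in (0:ℝ)..Δx, p.eval t = vm1)
    (h2 : (1/Δx) * ∫ t in Δx..(2*Δx), p.eval t = v0)
    (h3 : (1/Δx) * ∫ t in (2*Δx)..(3*Δx), p.eval t = vp1)
    (hcond : (-2*vm1 + 3*v0 - vp1) / (-vm1 + 2*v0 - vp1) ∉ Set.Ioo (0:ℝ) 3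
      ∨ -vm1 + 2*v0 - vp1 = 0) :
    MonotoneOn (fun x => p.eval x) (Set.Icc 0 (3*Δx))
      ∨ AntitoneOn (fun x => p.eval x) (Set.Icc 0 (3*Δx)) := by
  simp only [eval_eq_quadratic hdeg, integral_quadratic] at h1 h2 h3 ⊢
  generalize p.coeff 2 = a, p.coeff 1 = b, p.coeff 0 = c at h1 h2 h3 ⊢
  have hcurv : -vm1 + 2*v0 - vp1 = -(2 * a) * Δx ^ 2 := by
    rw [← h1, ← h2, ← h3]; field_simp; ring
  have hslope : -2*vm1 + 3*v0 - vp1 = b * Δx := by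
    rw [← h1, ← h2, ← h3]; field_simp; ring
  refine monotoneOn_or_antitoneOn_quadratic (or_iff_not_imp_left.2 fun ha hvertex => ?_)
  have hratio : (-2*vm1 + 3*v0 - vp1) / (-vm1 + 2*v0 - vp1) = -b / (2 * a) / Δx := by
    rw [hslope, hcurv]; field_simp
  refine hcond.resolve_right (by simp [hcurv, ha, hΔx.ne']) ?_
  rw [hratio]
  exact ⟨div_pos hvertex.1 hΔx, (div_lt_iff₀ hΔx).2 hvertex.2⟩
end

section
/- Let v be a C³ function of two variables with v(x_{i+1/2}, y_j) ≠ 0, and let c₁, c₂, c₃ be real constants with c₁ + c₂ + c₃ ≠ 0. If ε² = −[(1/6)v_{xx}(x_{i+1/2},y_j)Δx² + (1/24)v_{yy}(x_{i+1/2},y_j)Δy²] / [(c₁+c₂+c₃)v(x_{i+1/2},y_j)h²], then the perturbed reconstruction (1/2 + c₁ε²h²)v̄_{i,j} + (1/2 + c₂ε²h²)v̄_{i+1,j} + c₃ε²h²·v̄_{i,j−1} equals v(x_{i+1/2}, y_j) + O(Δx³) + O(Δy³). -/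
/-!
Write `V = v(a, b)` and `q = v_xx Δx²/6 + v_yy Δy²/24`. The cells `(i, j)` and `(i+1, j)` together
form a box centred at `(a, b)`, so averaging the second-order Taylor polynomial of `v` over it kills
the odd terms: `(v̄_{i,j} + v̄_{i+1,j})/2 = V + q + O(Δ³)`. Every cell average is `V + O(Δ)`.
Since `ε²h² (c₁ + c₂ + c₃) V = -q`, the reconstruction error equals
`((v̄_{i,j} + v̄_{i+1,j})/2 - V - q) + ε²h² Σₖ cₖ (v̄ₖ - V)`, a third-order term plus a product of
a second-order and a first-order one.
-/

open Filter Asymptotics Topology Set intervalIntegral Metric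

section Taylor
variable {E F : Type*} [NormedAddCommGroup E] [NormedSpace ℝ E] [NormedAddCommGroup F]
  [NormedSpace ℝ F]

theorem iteratedDeriv_comp_add_smul {f : E → F} {n : ℕ} (hf : ContDiff ℝ n f) (x y : E) (t : ℝ) :
    iteratedDeriv n (fun s : ℝ => f (x + s • y)) t
      = iteratedFDeriv ℝ n f (x + t • y) (fun _ => y) := by
  have hshift : ContDiff ℝ n (fun z => f (x + z)) := hf.comp (contDiff_const.add contDiff_id)
  rw [iteratedDeriv_eq_iteratedFDeriv, show (fun s : ℝ => f (x + s • y)) =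
    (fun z => f (x + z)) ∘ ContinuousLinearMap.toSpanSingleton ℝ y from rfl,
    ContinuousLinearMap.iteratedFDeriv_comp_right _ hshift _ le_rfl]
  simp [iteratedFDeriv_comp_add_left]

noncomputable def taylorPolyTwo (f : E → F) (p q : E) : F :=
  f p + fderiv ℝ f p (q - p) + (2 : ℝ)⁻¹ • fderiv ℝ (fderiv ℝ f) p (q - p) (q - p)

theorem continuous_taylorPolyTwo (f : E → F) (p : E) : Continuous (taylorPolyTwo f p) := by
  unfold taylorPolyTwo
  fun_prop

variable [CompleteSpace F]

theorem ContDiff.isBigO_sub_taylor {f : E → F} {n : ℕ} (hf : ContDiff ℝ (n + 1) f) (x : E) :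
    (fun y => f (x + y) - ∑ k ∈ Finset.range (n + 1),
        (k.factorial : ℝ)⁻¹ • iteratedFDeriv ℝ k f x (fun _ => y))
      =O[𝓝 0] fun y => ‖y‖ ^ (n + 1) := by
  set D := iteratedFDeriv ℝ (n + 1) f
  have hD : ∀ᶠ z in 𝓝 x, ‖D z‖ ≤ ‖D x‖ + 1 :=
    ((hf.continuous_iteratedFDeriv le_rfl).norm.continuousAt).eventually
      (Iic_mem_nhds (lt_add_one _))
  obtain ⟨δ, hδ, hball⟩ := Metric.eventually_nhds_iff_ball.mp hD
  refine IsBigO.of_bound (‖D x‖ + 1) ?_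
  filter_upwards [Metric.ball_mem_nhds 0 hδ] with y hy
  rw [map_add_eq_sum_add_integral_iteratedFDeriv (fun t _ => hf.contDiffAt), add_sub_cancel_left]
  have hint : ‖∫ t in (0:ℝ)..1, (1 - t) ^ n • D (x + t • y) (fun _ => y)‖
      ≤ (‖D x‖ + 1) * ‖y‖ ^ (n + 1) := by
    refine (norm_integral_le_of_norm_le_const
      (C := (‖D x‖ + 1) * ‖y‖ ^ (n + 1)) fun t ht => ?_).trans_eq (by simp)
    rw [uIoc_of_le zero_le_one] at ht
    have hxt : x + t • y ∈ Metric.ball x δ := by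
      rw [mem_ball_iff_norm, add_sub_cancel_left, norm_smul, Real.norm_of_nonneg ht.1.le]
      exact (mul_le_of_le_one_left (norm_nonneg y) ht.2).trans_lt (mem_ball_zero_iff.mp hy)
    calc ‖(1 - t) ^ n • D (x + t • y) (fun _ => y)‖
        ≤ 1 * (‖D (x + t • y)‖ * ∏ _ : Fin (n + 1), ‖y‖) := by
          rw [norm_smul]
          gcongr
          · rw [norm_pow, Real.norm_of_nonneg (by linarith [ht.2])]
            exact pow_le_one₀ (by linarith [ht.2]) (by linarith [ht.1])
          · exact (D (x + t • y)).le_opNorm _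
      _ ≤ (‖D x‖ + 1) * ‖y‖ ^ (n + 1) := by
          rw [one_mul, Finset.prod_const, Finset.card_univ, Fintype.card_fin]
          gcongr
          exact hball _ hxt
  calc ‖(n.factorial : ℝ)⁻¹ • ∫ t in (0:ℝ)..1, (1 - t) ^ n • D (x + t • y) (fun _ => y)‖
      ≤ 1 * ((‖D x‖ + 1) * ‖y‖ ^ (n + 1)) := by
        rw [norm_smul]
        gcongr
        rw [norm_inv, Real.norm_natCast]
        exact inv_le_one_of_one_le₀ (mod_cast n.factorial_pos)
    _ = _ := by simp

theorem ContDiff.isBigO_sub_taylorPolyTwo {f : E → F} (hf : ContDiff ℝ 3 f) (p : E) :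
    (fun q => f q - taylorPolyTwo f p q) =O[𝓝 p] fun q => ‖q - p‖ ^ 3 := by
  have h := (ContDiff.isBigO_sub_taylor (n := 2) hf p).comp_tendsto
    (tendsto_sub_nhds_zero_iff.2 (tendsto_id (x := 𝓝 p)))
  simpa [Function.comp_def, Finset.sum_range_succ, taylorPolyTwo, iteratedFDeriv_two_apply,
    Nat.factorial] using h

end Taylor

noncomputable def boxMean (g : ℝ × ℝ → ℝ) (x₀ x₁ y₀ y₁ : ℝ) : ℝ :=
  ((x₁ - x₀) * (y₁ - y₀))⁻¹ * ∫ s in x₀..x₁, ∫ t in y₀..y₁, g (s, t)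

section boxMean
variable {g g₁ g₂ : ℝ × ℝ → ℝ} {x₀ x₁ x₂ y₀ y₁ : ℝ}

theorem abs_boxMean_le {B : ℝ} (hx : x₀ < x₁) (hy : y₀ < y₁)
    (hB : ∀ q ∈ Icc x₀ x₁ ×ˢ Icc y₀ y₁, |g q| ≤ B) : |boxMean g x₀ x₁ y₀ y₁| ≤ B := by
  have harea : 0 < (x₁ - x₀) * (y₁ - y₀) := mul_pos (sub_pos.2 hx) (sub_pos.2 hy)
  have hinner : ∀ s ∈ uIoc x₀ x₁, ‖∫ t in y₀..y₁, g (s, t)‖ ≤ B * (y₁ - y₀) := by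
    intro s hs
    rw [uIoc_of_le hx.le] at hs
    refine (norm_integral_le_of_norm_le_const fun t ht => ?_).trans_eq
      (by rw [abs_of_pos (sub_pos.2 hy)])
    rw [uIoc_of_le hy.le] at ht
    exact hB _ ⟨Ioc_subset_Icc_self hs, Ioc_subset_Icc_self ht⟩
  have houter := norm_integral_le_of_norm_le_const hinner
  rw [Real.norm_eq_abs, abs_of_pos (sub_pos.2 hx)] at houter
  rw [boxMean, abs_mul, abs_inv, abs_of_pos harea, inv_mul_le_iff₀ harea]
  linarith

theorem continuous_intervalIntegral_snd (hg : Continuous g) (y₀ y₁ : ℝ) :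
    Continuous fun s => ∫ t in y₀..y₁, g (s, t) :=
  continuous_parametric_intervalIntegral_of_continuous' (f := fun s t => g (s, t)) hg y₀ y₁

theorem boxMean_sub (hg₁ : Continuous g₁) (hg₂ : Continuous g₂) :
    boxMean (fun q => g₁ q - g₂ q) x₀ x₁ y₀ y₁ = boxMean g₁ x₀ x₁ y₀ y₁ - boxMean g₂ x₀ x₁ y₀ y₁ := by
  have hinner : ∀ s, ∫ t in y₀..y₁, (g₁ (s, t) - g₂ (s, t))
      = (∫ t in y₀..y₁, g₁ (s, t)) - ∫ t in y₀..y₁, g₂ (s, t) := fun s =>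
    integral_sub ((by fun_prop : Continuous fun t => g₁ (s, t)).intervalIntegrable _ _)
      ((by fun_prop : Continuous fun t => g₂ (s, t)).intervalIntegrable _ _)
  simp only [boxMean, hinner]
  rw [integral_sub ((continuous_intervalIntegral_snd hg₁ _ _).intervalIntegrable _ _)
    ((continuous_intervalIntegral_snd hg₂ _ _).intervalIntegrable _ _), mul_sub]

theorem boxMean_const (c : ℝ) (hx : x₀ ≠ x₁) (hy : y₀ ≠ y₁) :
    boxMean (fun _ => c) x₀ x₁ y₀ y₁ = c := by
  have : (x₁ - x₀) * (y₁ - y₀) ≠ 0 := mul_ne_zero (sub_ne_zero.2 hx.symm) (sub_ne_zero.2 hy.symm)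
  simp only [boxMean, integral_const, smul_eq_mul]
  field_simp

theorem boxMean_add_boxMean (hg : Continuous g) (hx : x₁ - x₀ = x₂ - x₁) :
    boxMean g x₀ x₁ y₀ y₁ + boxMean g x₁ x₂ y₀ y₁ = 2 * boxMean g x₀ x₂ y₀ y₁ := by
  have hint := continuous_intervalIntegral_snd hg y₀ y₁
  rw [boxMean, boxMean, boxMean, ← integral_add_adjacent_intervals (hint.intervalIntegrable x₀ x₁)
    (hint.intervalIntegrable x₁ x₂), ← hx, show x₂ - x₀ = 2 * (x₁ - x₀) by linarith]
  simp only [mul_inv]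
  ring

theorem Icc_prod_Icc_subset_closedBall {a b r : ℝ} (hx₀ : a - r ≤ x₀)
    (hx₁ : x₁ ≤ a + r) (hy₀ : b - r ≤ y₀) (hy₁ : y₁ ≤ b + r) :
    Icc x₀ x₁ ×ˢ Icc y₀ y₁ ⊆ closedBall (a, b) r := by
  rw [← closedBall_prod_same, Real.closedBall_eq_Icc, Real.closedBall_eq_Icc]
  exact prod_mono (Icc_subset_Icc hx₀ hx₁) (Icc_subset_Icc hy₀ hy₁)

end boxMean

theorem isBigO_boxMean {α : Type*} {l : Filter α} {g : ℝ × ℝ → ℝ} {p : ℝ × ℝ} {k : ℕ}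
    (hg : g =O[𝓝 p] fun q => ‖q - p‖ ^ k) {x₀ x₁ y₀ y₁ r : α → ℝ} (hr : Tendsto r l (𝓝 0))
    (hbox : ∀ᶠ i in l, x₀ i < x₁ i ∧ y₀ i < y₁ i ∧
      Icc (x₀ i) (x₁ i) ×ˢ Icc (y₀ i) (y₁ i) ⊆ closedBall p (r i)) :
    (fun i => boxMean g (x₀ i) (x₁ i) (y₀ i) (y₁ i)) =O[l] fun i => r i ^ k := by
  obtain ⟨C, hC, hCg⟩ := hg.exists_pos
  obtain ⟨δ, hδ, hball⟩ := Metric.eventually_nhds_iff_ball.mp hCg.bound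
  refine IsBigO.of_bound C ?_
  filter_upwards [hbox, hr (Iio_mem_nhds hδ)] with i ⟨hx, hy, hsub⟩ hri
  have hr0 : 0 ≤ r i := dist_nonneg.trans <| mem_closedBall.1 <|
    hsub (mk_mem_prod (left_mem_Icc.2 hx.le) (left_mem_Icc.2 hy.le))
  rw [Real.norm_eq_abs, norm_pow, Real.norm_of_nonneg hr0]
  refine abs_boxMean_le hx hy fun q hq => ?_
  have hqp : dist q p ≤ r i := hsub hq
  calc |g q| ≤ C * ‖‖q - p‖ ^ k‖ := hball q (hqp.trans_lt hri)
    _ ≤ C * r i ^ k := by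
        rw [norm_pow, norm_norm, ← dist_eq_norm]
        gcongr

theorem integral_quadratic_symm (c₀ c₁ c₂ r w : ℝ) :
    ∫ t in (r - w)..(r + w), (c₀ + c₁ * (t - r) + c₂ * (t - r) ^ 2)
      = 2 * w * (c₀ + c₂ * w ^ 2 / 3) := by
  have hderiv : ∀ t, HasDerivAt (fun t => c₀ * t + c₁ / 2 * (t - r) ^ 2 + c₂ / 3 * (t - r) ^ 3)
      (c₀ + c₁ * (t - r) + c₂ * (t - r) ^ 2) t := by
    intro t
    have h1 : HasDerivAt (fun t => t - r) 1 t := (hasDerivAt_id' t).sub_const r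
    refine ((((hasDerivAt_id' t).const_mul c₀).fun_add ((h1.fun_pow 2).const_mul (c₁ / 2))).fun_add
      ((h1.fun_pow 3).const_mul (c₂ / 3))).congr_deriv ?_
    norm_num
    ring
  rw [integral_eq_sub_of_hasDerivAt (fun t _ => hderiv t)
    ((by fun_prop : Continuous _).intervalIntegrable _ _)]
  ring

theorem boxMean_quadratic_symm (c c₁ c₂ c₁₁ c₁₂ c₂₂ a b ρ σ : ℝ) (hρ : ρ ≠ 0) (hσ : σ ≠ 0) :
    boxMean (fun q => c + c₁ * (q.1 - a) + c₂ * (q.2 - b) + c₁₁ * (q.1 - a) ^ 2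
        + c₁₂ * (q.1 - a) * (q.2 - b) + c₂₂ * (q.2 - b) ^ 2) (a - ρ) (a + ρ) (b - σ) (b + σ)
      = c + c₁₁ * ρ ^ 2 / 3 + c₂₂ * σ ^ 2 / 3 := by
  have hinner : ∀ s : ℝ, ∫ t in (b - σ)..(b + σ), (c + c₁ * (s - a) + c₂ * (t - b)
        + c₁₁ * (s - a) ^ 2 + c₁₂ * (s - a) * (t - b) + c₂₂ * (t - b) ^ 2)
      = 2 * σ * (c + c₂₂ * σ ^ 2 / 3) + 2 * σ * c₁ * (s - a) + 2 * σ * c₁₁ * (s - a) ^ 2 := by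
    intro s
    rw [integral_congr (g := fun t => (c + c₁ * (s - a) + c₁₁ * (s - a) ^ 2)
      + (c₂ + c₁₂ * (s - a)) * (t - b) + c₂₂ * (t - b) ^ 2) fun t _ => by ring,
      integral_quadratic_symm]
    ring
  simp only [boxMean, hinner, integral_quadratic_symm, add_sub_sub_cancel, ← two_mul]
  field_simp
  ring

section Plane
variable {F : ℝ × ℝ → ℝ}

theorem iteratedDeriv_two_slice_fst (hF : ContDiff ℝ 2 F) (a b : ℝ) :
    iteratedDeriv 2 (fun s => F (s, b)) a = fderiv ℝ (fderiv ℝ F) (a, b) (1, 0) (1, 0) := by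
  have h := iteratedDeriv_comp_add_smul hF ((0 : ℝ), b) ((1 : ℝ), (0 : ℝ)) a
  simp only [iteratedFDeriv_two_apply] at h
  simpa using h

theorem iteratedDeriv_two_slice_snd (hF : ContDiff ℝ 2 F) (a b : ℝ) :
    iteratedDeriv 2 (fun t => F (a, t)) b = fderiv ℝ (fderiv ℝ F) (a, b) (0, 1) (0, 1) := by
  have h := iteratedDeriv_comp_add_smul hF (a, (0 : ℝ)) ((0 : ℝ), (1 : ℝ)) b
  simp only [iteratedFDeriv_two_apply] at h
  simpa using h

theorem taylorPolyTwo_prod_apply (a b s t : ℝ) :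
    taylorPolyTwo F (a, b) (s, t) = F (a, b) + fderiv ℝ F (a, b) (1, 0) * (s - a)
      + fderiv ℝ F (a, b) (0, 1) * (t - b)
      + fderiv ℝ (fderiv ℝ F) (a, b) (1, 0) (1, 0) / 2 * (s - a) ^ 2
      + (fderiv ℝ (fderiv ℝ F) (a, b) (1, 0) (0, 1) + fderiv ℝ (fderiv ℝ F) (a, b) (0, 1) (1, 0))
        / 2 * (s - a) * (t - b)
      + fderiv ℝ (fderiv ℝ F) (a, b) (0, 1) (0, 1) / 2 * (t - b) ^ 2 := by
  have h : ((s, t) : ℝ × ℝ) - (a, b) = (s - a) • ((1 : ℝ), (0 : ℝ)) + (t - b) • ((0 : ℝ), (1 : ℝ)) := by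
    ext <;> simp
  simp only [taylorPolyTwo, h, map_add, map_smul, add_apply, smul_apply, smul_eq_mul]
  ring

theorem boxMean_taylorPolyTwo_symm (a b : ℝ) {ρ σ : ℝ} (hρ : ρ ≠ 0) (hσ : σ ≠ 0) :
    boxMean (taylorPolyTwo F (a, b)) (a - ρ) (a + ρ) (b - σ) (b + σ)
      = F (a, b) + fderiv ℝ (fderiv ℝ F) (a, b) (1, 0) (1, 0) * ρ ^ 2 / 6
        + fderiv ℝ (fderiv ℝ F) (a, b) (0, 1) (0, 1) * σ ^ 2 / 6 := by
  have h := boxMean_quadratic_symm (F (a, b)) (fderiv ℝ F (a, b) (1, 0)) (fderiv ℝ F (a, b) (0, 1))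
    (fderiv ℝ (fderiv ℝ F) (a, b) (1, 0) (1, 0) / 2)
    ((fderiv ℝ (fderiv ℝ F) (a, b) (1, 0) (0, 1) + fderiv ℝ (fderiv ℝ F) (a, b) (0, 1) (1, 0)) / 2)
    (fderiv ℝ (fderiv ℝ F) (a, b) (0, 1) (0, 1) / 2) a b ρ σ hρ hσ
  have hT : taylorPolyTwo F (a, b) = fun q => F (a, b) + fderiv ℝ F (a, b) (1, 0) * (q.1 - a)
      + fderiv ℝ F (a, b) (0, 1) * (q.2 - b)
      + fderiv ℝ (fderiv ℝ F) (a, b) (1, 0) (1, 0) / 2 * (q.1 - a) ^ 2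
      + (fderiv ℝ (fderiv ℝ F) (a, b) (1, 0) (0, 1) + fderiv ℝ (fderiv ℝ F) (a, b) (0, 1) (1, 0))
        / 2 * (q.1 - a) * (q.2 - b)
      + fderiv ℝ (fderiv ℝ F) (a, b) (0, 1) (0, 1) / 2 * (q.2 - b) ^ 2 := by
    funext q
    exact taylorPolyTwo_prod_apply a b q.1 q.2
  rw [hT, h]
  ring

theorem ContDiff.isBigO_boxMean_symm_sub {α : Type*} {l : Filter α} (hF : ContDiff ℝ 3 F)
    (a b : ℝ) {ρ σ : α → ℝ} (hρ : Tendsto ρ l (𝓝 0)) (hσ : Tendsto σ l (𝓝 0))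
    (hpos : ∀ᶠ i in l, 0 < ρ i ∧ 0 < σ i) :
    (fun i => boxMean F (a - ρ i) (a + ρ i) (b - σ i) (b + σ i)
        - (F (a, b) + iteratedDeriv 2 (fun s => F (s, b)) a * ρ i ^ 2 / 6
          + iteratedDeriv 2 (fun t => F (a, t)) b * σ i ^ 2 / 6))
      =O[l] fun i => max (ρ i) (σ i) ^ 3 := by
  have hF2 : ContDiff ℝ 2 F := hF.of_le (by norm_num)
  rw [iteratedDeriv_two_slice_fst hF2, iteratedDeriv_two_slice_snd hF2]
  refine (isBigO_boxMean (x₀ := fun i => a - ρ i) (x₁ := fun i => a + ρ i) (y₀ := fun i => b - σ i)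
    (y₁ := fun i => b + σ i) (hF.isBigO_sub_taylorPolyTwo (a, b)) (by simpa using hρ.max hσ) ?_).congr'
    ?_ EventuallyEq.rfl
  · filter_upwards [hpos] with i ⟨hρi, hσi⟩
    exact ⟨by linarith, by linarith, Icc_prod_Icc_subset_closedBall
      (by linarith [le_max_left (ρ i) (σ i)]) (by linarith [le_max_left (ρ i) (σ i)])
      (by linarith [le_max_right (ρ i) (σ i)]) (by linarith [le_max_right (ρ i) (σ i)])⟩
  · filter_upwards [hpos] with i ⟨hρi, hσi⟩
    rw [boxMean_sub hF.continuous (continuous_taylorPolyTwo F _),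
      boxMean_taylorPolyTwo_symm a b hρi.ne' hσi.ne']

end Plane

/-- Mean over the cell `(i + m, j + n)` of the grid with spacing `Δx × Δy` in which `(a, b)` is the
midpoint of the right edge of cell `(i, j)`. -/
noncomputable def cellMean (g : ℝ × ℝ → ℝ) (a b Δx Δy : ℝ) (m n : ℤ) : ℝ :=
  boxMean g (a + (m - 1) * Δx) (a + m * Δx) (b + (n - 1 / 2) * Δy) (b + (n + 1 / 2) * Δy)

section cellMean
variable {g : ℝ × ℝ → ℝ}

theorem cellMean_zero_add_cellMean_one (hg : Continuous g) (a b Δx Δy : ℝ) :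
    cellMean g a b Δx Δy 0 0 + cellMean g a b Δx Δy 1 0
      = 2 * boxMean g (a - Δx) (a + Δx) (b - Δy / 2) (b + Δy / 2) := by
  rw [← boxMean_add_boxMean hg (x₁ := a) (by ring)]
  simp only [cellMean]
  push_cast
  congr 1 <;> congr 1 <;> ring

theorem isBigO_cellMean_sub (hg : Continuous g) {a b : ℝ} (hgd : DifferentiableAt ℝ g (a, b))
    (m n : ℤ) :
    (fun d : ℝ × ℝ => cellMean g a b d.1 d.2 m n - g (a, b))
      =O[𝓝[Ioi 0 ×ˢ Ioi 0] 0] fun d => ‖d‖ := by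
  set R : ℝ := |(m : ℝ)| + |(n : ℝ)| + 1
  have hO : (fun q => g q - g (a, b)) =O[𝓝 (a, b)] fun q => ‖q - (a, b)‖ ^ 1 := by
    simpa using hgd.isBigO_sub.norm_right
  have hr : Tendsto (fun d : ℝ × ℝ => R * ‖d‖) (𝓝[Ioi 0 ×ˢ Ioi 0] 0) (𝓝 0) :=
    ((continuous_const.mul continuous_norm).tendsto' 0 0 (by simp)).mono_left nhdsWithin_le_nhds
  refine ((isBigO_boxMean (x₀ := fun d => a + (m - 1) * d.1) (x₁ := fun d => a + m * d.1)
    (y₀ := fun d => b + (n - 1 / 2) * d.2) (y₁ := fun d => b + (n + 1 / 2) * d.2) hO hr ?_).congr'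
    ?_ EventuallyEq.rfl).trans ?_
  · filter_upwards [self_mem_nhdsWithin] with d ⟨hX, hY⟩
    have hcorner : ∀ c Δ : ℝ, |c| ≤ R → |Δ| ≤ ‖d‖ → -(R * ‖d‖) ≤ c * Δ ∧ c * Δ ≤ R * ‖d‖ :=
      fun c Δ hc hΔ => abs_le.1 ((abs_mul c Δ).trans_le
        (mul_le_mul hc hΔ (abs_nonneg _) (by positivity)))
    have hXd : |d.1| ≤ ‖d‖ := norm_fst_le d
    have hYd : |d.2| ≤ ‖d‖ := norm_snd_le d
    have hmn := abs_nonneg (m : ℝ)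
    have hnn := abs_nonneg (n : ℝ)
    have hm₀ := hcorner (m - 1) d.1 ((abs_sub _ _).trans (by norm_num [R])) hXd
    have hm₁ := hcorner m d.1 (by linarith) hXd
    have hn₀ := hcorner (n - 1 / 2) d.2 ((abs_sub _ _).trans (by norm_num [R]; linarith)) hYd
    have hn₁ := hcorner (n + 1 / 2) d.2 ((abs_add_le _ _).trans (by norm_num [R]; linarith)) hYd
    refine ⟨by nlinarith [hX.out], by nlinarith [hY.out], Icc_prod_Icc_subset_closedBall
      (by linarith) (by linarith) (by linarith) (by linarith)⟩
  · filter_upwards [self_mem_nhdsWithin] with d ⟨hX, hY⟩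
    rw [boxMean_sub hg continuous_const, boxMean_const _ (by nlinarith [hX.out])
      (by nlinarith [hY.out]), cellMean]
  · simpa using (isBigO_refl (fun d : ℝ × ℝ => ‖d‖) _).const_mul_left R

theorem ContDiff.isBigO_cellMean_avg_sub (hg : ContDiff ℝ 3 g) (a b : ℝ) :
    (fun d : ℝ × ℝ => (cellMean g a b d.1 d.2 0 0 + cellMean g a b d.1 d.2 1 0) / 2
        - (g (a, b) + (1 / 6 * iteratedDeriv 2 (fun s => g (s, b)) a * d.1 ^ 2
          + 1 / 24 * iteratedDeriv 2 (fun t => g (a, t)) b * d.2 ^ 2)))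
      =O[𝓝[Ioi 0 ×ˢ Ioi 0] 0] fun d => ‖d‖ ^ 3 := by
  have hquad : ∀ᶠ d : ℝ × ℝ in 𝓝[Ioi 0 ×ˢ Ioi 0] 0, 0 < d.1 ∧ 0 < d.2/2 := by
    filter_upwards [self_mem_nhdsWithin] with d ⟨hX, hY⟩
    exact ⟨hX, half_pos hY⟩
  have hfst : Tendsto (fun d : ℝ × ℝ => d.1) (𝓝[Ioi 0 ×ˢ Ioi 0] 0) (𝓝 0) :=
    (continuous_fst.tendsto' 0 0 rfl).mono_left nhdsWithin_le_nhds
  have hsnd : Tendsto (fun d : ℝ × ℝ => d.2 / 2) (𝓝[Ioi 0 ×ˢ Ioi 0] 0) (𝓝 0) :=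
    ((continuous_snd.div_const 2).tendsto' 0 0 (by simp)).mono_left nhdsWithin_le_nhds
  refine ((hg.isBigO_boxMean_symm_sub a b hfst hsnd hquad).congr_left fun d => ?_).trans ?_
  · rw [cellMean_zero_add_cellMean_one hg.continuous]
    ring
  · refine IsBigO.of_bound 1 ?_
    filter_upwards [hquad] with d ⟨hX, hY⟩
    have hmax : max d.1 (d.2 / 2) ≤ ‖d‖ := max_le ((le_abs_self _).trans (norm_fst_le d))
      (by linarith [(le_abs_self d.2).trans (norm_snd_le d)])
    rw [one_mul, norm_pow, norm_pow, norm_norm, Real.norm_of_nonneg (hX.le.trans (le_max_left _ _))]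
    gcongr

end cellMean

theorem isBigO_reconstruction_sub {α : Type*} {l : Filter α} {φ u₁ u₂ u₃ q : α → ℝ}
    {V c₁ c₂ c₃ : ℝ} (hV : (c₁ + c₂ + c₃) * V ≠ 0)
    (hmid : (fun i => (u₁ i + u₂ i) / 2 - (V + q i)) =O[l] fun i => φ i ^ 3)
    (hu₁ : (fun i => u₁ i - V) =O[l] φ) (hu₂ : (fun i => u₂ i - V) =O[l] φ)
    (hu₃ : (fun i => u₃ i - V) =O[l] φ) (hq : q =O[l] fun i => φ i ^ 2) :
    (fun i => (1 / 2 + c₁ * (-q i / ((c₁ + c₂ + c₃) * V))) * u₁ i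
        + (1 / 2 + c₂ * (-q i / ((c₁ + c₂ + c₃) * V))) * u₂ i
        + c₃ * (-q i / ((c₁ + c₂ + c₃) * V)) * u₃ i - V) =O[l] fun i => φ i ^ 3 := by
  have hK : (fun i => -q i / ((c₁ + c₂ + c₃) * V)) =O[l] fun i => φ i ^ 2 :=
    (hq.const_mul_left (-((c₁ + c₂ + c₃) * V)⁻¹)).congr_left fun i => by ring
  have hL : (fun i => c₁ * (u₁ i - V) + c₂ * (u₂ i - V) + c₃ * (u₃ i - V)) =O[l] φ :=
    ((hu₁.const_mul_left c₁).add (hu₂.const_mul_left c₂)).add (hu₃.const_mul_left c₃)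
  refine (hmid.add ((hK.mul hL).congr_right fun i => by ring)).congr_left fun i => ?_
  have hKV : -q i / ((c₁ + c₂ + c₃) * V) * ((c₁ + c₂ + c₃) * V) = -q i := div_mul_cancel₀ _ hV
  linear_combination -hKV

theorem isBigO_sq_fst_add_sq_snd {l : Filter (ℝ × ℝ)} (α β : ℝ) :
    (fun d : ℝ × ℝ => α * d.1 ^ 2 + β * d.2 ^ 2) =O[l] fun d => ‖d‖ ^ 2 :=
  (((isBigO_fst_prod' (f' := id)).norm_right.pow 2).const_mul_left α).add
    (((isBigO_snd_prod' (f' := id)).norm_right.pow 2).const_mul_left β)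

theorem isBigO_norm_pow_abs_add_abs (l : Filter (ℝ × ℝ)) (k : ℕ) :
    (fun d : ℝ × ℝ => ‖d‖ ^ k) =O[l] fun d => |d.1| ^ k + |d.2| ^ k := by
  refine IsBigO.of_bound 1 (Eventually.of_forall fun d => ?_)
  rw [one_mul, norm_pow, norm_norm, Real.norm_of_nonneg (by positivity), Prod.norm_def,
    Real.norm_eq_abs, Real.norm_eq_abs]
  rcases le_total |d.1| |d.2| with h | h
  · rw [max_eq_right h]
    linarith [pow_nonneg (abs_nonneg d.1) k]
  · rw [max_eq_left h]
    linarith [pow_nonneg (abs_nonneg d.2) k]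

theorem stmt_14_general (v : ℝ → ℝ → ℝ) (hv : ContDiff ℝ 3 (fun p : ℝ × ℝ => v p.1 p.2))
    (a b : ℝ) (hvab : v a b ≠ 0) (c₁ c₂ c₃ : ℝ) (hc : c₁ + c₂ + c₃ ≠ 0)
    (h : ℝ → ℝ → ℝ) (hpos : ∀ dx dy, 0 < dx → 0 < dy → 0 < h dx dy) :
    (fun d : ℝ × ℝ =>
        (let Δx := d.1
         let Δy := d.2
         let vij := (1/(Δx*Δy)) * ∫ s in (a - Δx)..a, ∫ t in (b - Δy/2)..(b + Δy/2), v s t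
         let vi1j := (1/(Δx*Δy)) * ∫ s in a..(a + Δx), ∫ t in (b - Δy/2)..(b + Δy/2), v s t
         let vijm1 := (1/(Δx*Δy)) * ∫ s in (a - Δx)..a, ∫ t in (b - 3*Δy/2)..(b - Δy/2), v s t
         let e2 := -((1/6) * iteratedDeriv 2 (fun s => v s b) a * Δx ^ 2
              + (1/24) * iteratedDeriv 2 (fun t => v a t) b * Δy ^ 2)
            / ((c₁ + c₂ + c₃) * v a b * (h Δx Δy) ^ 2)
         (1/2 + c₁ * e2 * (h Δx Δy) ^ 2) * vij
           + (1/2 + c₂ * e2 * (h Δx Δy) ^ 2) * vi1j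
           + (c₃ * e2 * (h Δx Δy) ^ 2) * vijm1)
        - v a b)
      =O[nhdsWithin (0 : ℝ × ℝ) (Set.Ioi 0 ×ˢ Set.Ioi 0)]
        (fun d : ℝ × ℝ => |d.1| ^ 3 + |d.2| ^ 3) := by
  have hvd : DifferentiableAt ℝ (fun p : ℝ × ℝ => v p.1 p.2) (a, b) :=
    hv.differentiable (by norm_num) _
  have key := isBigO_reconstruction_sub (mul_ne_zero hc hvab) (hv.isBigO_cellMean_avg_sub a b)
    (isBigO_cellMean_sub hv.continuous hvd 0 0) (isBigO_cellMean_sub hv.continuous hvd 1 0)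
    (isBigO_cellMean_sub hv.continuous hvd 0 (-1)) (isBigO_sq_fst_add_sq_snd _ _)
  refine (key.congr' ?_ EventuallyEq.rfl).trans (isBigO_norm_pow_abs_add_abs _ 3)
  filter_upwards [self_mem_nhdsWithin] with d ⟨hX, hY⟩
  have hh : h d.1 d.2 ^ 2 ≠ 0 := pow_ne_zero 2 (hpos d.1 d.2 hX hY).ne'
  have hcancel : ∀ c N M : ℝ, c * (N / (M * h d.1 d.2 ^ 2)) * h d.1 d.2 ^ 2 = c * (N / M) := by
    intro c N M
    rw [mul_assoc, div_mul_eq_mul_div, mul_div_mul_right _ _ hh]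
  simp only [hcancel, cellMean, boxMean]
  push_cast
  ring_nf

/-- Third-order accuracy of the perturbed 2D linear reconstruction with the optimal choice of
the shape parameter `ε²`, which cancels the second-order error terms. -/
theorem stmt_14 (v : ℝ → ℝ → ℝ) (hv : ContDiff ℝ 3 (fun p : ℝ × ℝ => v p.1 p.2))
    (a b : ℝ) (hvab : v a b ≠ 0) (c₁ c₂ c₃ : ℝ) (hc : c₁ + c₂ + c₃ ≠ 0)
    (h : ℝ → ℝ → ℝ) (hpos : ∀ dx dy, 0 < dx → 0 < dy → 0 < h dx dy)
    (C c : ℝ) (hC : 0 < C) (hc' : 0 < c)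
    (hcomp : ∀ dx dy, 0 < dx → 0 < dy →
      c * max dx dy ≤ h dx dy ∧ h dx dy ≤ C * max dx dy) :
    (fun d : ℝ × ℝ =>
        (let Δx := d.1
         let Δy := d.2
         let vij := (1/(Δx*Δy)) * ∫ s in (a - Δx)..a, ∫ t in (b - Δy/2)..(b + Δy/2), v s t
         let vi1j := (1/(Δx*Δy)) * ∫ s in a..(a + Δx), ∫ t in (b - Δy/2)..(b + Δy/2), v s t
         let vijm1 := (1/(Δx*Δy)) * ∫ s in (a - Δx)..a, ∫ t in (b - 3*Δy/2)..(b - Δy/2), v s t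
         let e2 := -((1/6) * iteratedDeriv 2 (fun s => v s b) a * Δx ^ 2
              + (1/24) * iteratedDeriv 2 (fun t => v a t) b * Δy ^ 2)
            / ((c₁ + c₂ + c₃) * v a b * (h Δx Δy) ^ 2)
         (1/2 + c₁ * e2 * (h Δx Δy) ^ 2) * vij
           + (1/2 + c₂ * e2 * (h Δx Δy) ^ 2) * vi1j
           + (c₃ * e2 * (h Δx Δy) ^ 2) * vijm1)
        - v a b)
      =O[nhdsWithin (0 : ℝ × ℝ) (Set.Ioi 0 ×ˢ Set.Ioi 0)]
        (fun d : ℝ × ℝ => |d.1| ^ 3 + |d.2| ^ 3) :=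
  stmt_14_general v hv a b hvab c₁ c₂ c₃ hc h hpos
end
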